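/- Let p : Γ̃ → Γ be a universal cover of a finite connected simple graph Γ, with a fixed linear order on V(Γ̃). Let T be a finite subtree of Γ̃ and F ⊆ V(T) with p(F) = V(Γ). If φ(Γ,T) is F-surviving, then for every w ∈ G(Γ) one has ‖w‖ ≤ ‖φ(Γ,T)(w)‖ ≤ |V(T)|·‖w‖ (word lengths in G(Γ) and G(T) respectively); in particular φ(Γ,T) is an injective homomorphism and a quasi-isometric group embedding. -/

import Mathlib

/-! Right-angled Artin groups in the "opposite" convention:
generators are vertices, and two generators commute iff the vertices are NOT adjacent. -/

/-- The commutation relators for the right-angled Artin group (opposite convention):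
one commutator for each pair of distinct non-adjacent vertices. -/
def raagRels {V : Type*} (Γ : SimpleGraph V) : Set (FreeGroup V) :=
  {r | ∃ u v : V, u ≠ v ∧ ¬ Γ.Adj u v ∧
    r = FreeGroup.of u * FreeGroup.of v * (FreeGroup.of u)⁻¹ * (FreeGroup.of v)⁻¹}

/-- The right-angled Artin group `G(Γ)` (opposite convention). -/
abbrev Raag {V : Type*} (Γ : SimpleGraph V) : Type _ := PresentedGroup (raagRels Γ)

/-- The vertex generators of `G(Γ)`. -/
abbrev Raag.of {V : Type*} (Γ : SimpleGraph V) (v : V) : Raag Γ := PresentedGroup.of v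

/-- The element of `G(Γ)` represented by a word: a list of letters, where the letter `(v, b)`
stands for `v` if `b = true` and for `v⁻¹` if `b = false`. -/
def wordProd {V : Type*} (Γ : SimpleGraph V) (w : List (V × Bool)) : Raag Γ :=
  (w.map fun l => if l.2 then Raag.of Γ l.1 else (Raag.of Γ l.1)⁻¹).prod

/-- A word is reduced if no shorter word represents the same element of `G(Γ)`. -/
def IsReducedWord {V : Type*} (Γ : SimpleGraph V) (w : List (V × Bool)) : Prop :=
  ∀ w' : List (V × Bool), wordProd Γ w' = wordProd Γ w → w.length ≤ w'.length

/-- The word length of `g` with respect to a generating set `S` of a group: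
the least length of a list of elements of `S ∪ S⁻¹` whose product is `g`. -/
noncomputable def wordLength {G : Type*} [Group G] (S : Set G) (g : G) : ℕ :=
  sInf {n | ∃ l : List G, (∀ x ∈ l, x ∈ S ∨ x⁻¹ ∈ S) ∧ l.prod = g ∧ l.length = n}

/-- The (right-invariant) word metric associated to a generating set. -/
noncomputable def wordDist {G : Type*} [Group G] (S : Set G) (x y : G) : ℝ :=
  (wordLength S (y * x⁻¹) : ℝ)

/-- Word length in `G(Γ)` with respect to the vertex generating set. -/
noncomputable def raagNorm {V : Type*} (Γ : SimpleGraph V) (g : Raag Γ) : ℕ :=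
  wordLength (Set.range (Raag.of Γ)) g

/-- The word metric on `G(Γ)` with respect to the vertex generating set. -/
noncomputable def raagDist {V : Type*} (Γ : SimpleGraph V) (x y : Raag Γ) : ℝ :=
  wordDist (Set.range (Raag.of Γ)) x y

/-- A quasi-isometric group embedding: an injective group homomorphism which
is a quasi-isometric embedding with respect to the given metrics. -/
def IsQIEmbedding {G H : Type*} [Group G] [Group H] (f : G →* H)
    (dG : G → G → ℝ) (dH : H → H → ℝ) : Prop :=
  Function.Injective f ∧ ∃ C : ℝ, 1 ≤ C ∧ ∀ x y : G,
    dG x y / C - C ≤ dH (f x) (f y) ∧ dH (f x) (f y) ≤ C * dG x y + C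

/-- The support of `g ∈ G(Γ)`: vertices occurring in some reduced word representing `g`. -/
def raagSupp {V : Type*} (Γ : SimpleGraph V) (g : Raag Γ) : Set V :=
  {v | ∃ w : List (V × Bool), IsReducedWord Γ w ∧ wordProd Γ w = g ∧ ∃ b, (v, b) ∈ w}

/-- A cancellation of the vertex `v` in the word `w`: a subword `v^{±1} w' v^{∓1}` where the
support of the element represented by `w'` is disjoint from the link of `v`. -/
def HasCancellationOf {V : Type*} (Γ : SimpleGraph V) (w : List (V × Bool)) (v : V) : Prop :=
  ∃ (w₁ w' w₂ : List (V × Bool)) (b : Bool),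
    w = w₁ ++ (v, b) :: (w' ++ (v, !b) :: w₂) ∧
    ∀ u ∈ raagSupp Γ (wordProd Γ w'), ¬ Γ.Adj v u

/-- An innermost cancellation of the vertex `v` in the word `w`: a cancellation
`v^{±1} w' v^{∓1}` in which moreover no letter of `w'` involves `v`. -/
def HasInnermostCancellationOf {V : Type*} (Γ : SimpleGraph V) (w : List (V × Bool)) (v : V) :
    Prop :=
  ∃ (w₁ w' w₂ : List (V × Bool)) (b : Bool),
    w = w₁ ++ (v, b) :: (w' ++ (v, !b) :: w₂) ∧
    (∀ u ∈ raagSupp Γ (wordProd Γ w'), ¬ Γ.Adj v u) ∧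
    ∀ b' : Bool, (v, b') ∉ w'

/-- A covering of simple graphs: a graph homomorphism which is bijective on neighbor sets. -/
structure IsGraphCovering {V' V : Type*} (Γ' : SimpleGraph V') (Γ : SimpleGraph V)
    (p : V' → V) : Prop where
  adj : ∀ {x y : V'}, Γ'.Adj x y → Γ.Adj (p x) (p y)
  bijOn : ∀ x : V', Set.BijOn p (Γ'.neighborSet x) (Γ.neighborSet (p x))

/-- A universal cover of a connected graph `Γ`: a covering whose total graph is a tree. -/
def IsUniversalCover {V' V : Type*} (Γ' : SimpleGraph V') (Γ : SimpleGraph V)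
    (p : V' → V) : Prop :=
  IsGraphCovering Γ' Γ p ∧ Γ'.IsTree

section Phi

variable {V' V : Type*} [LinearOrder V'] [DecidableEq V]

/-- The lifts in `T` of a vertex `v`, listed in increasing order. -/
def liftVerts (p : V' → V) (T : Finset V') (v : V) : List V' :=
  (T.filter fun t => p t = v).sort (· ≤ ·)

/-- The lifts in `T` of a vertex `v`, in increasing order, as vertices of the induced subgraph. -/
def liftSubVerts (p : V' → V) (T : Finset V') (v : V) : List (↥(T : Set V')) :=
  (liftVerts p T v).pmap (fun t ht => (⟨t, ht⟩ : ↥(T : Set V')))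
    (fun t ht => by
      have : t ∈ T := (Finset.mem_filter.mp ((Finset.mem_sort _).mp ht)).1
      exact Finset.mem_coe.mpr this)

/-- `φ(Γ,T)` sends each vertex `v` of `Γ` to the product, in increasing order,
of the lifts of `v` lying in `T`.  This predicate singles out the homomorphism `φ(Γ,T)`. -/
def IsPhi (Γ : SimpleGraph V) (Γ' : SimpleGraph V') (p : V' → V) (T : Finset V')
    (φ : Raag Γ →* Raag (Γ'.induce (T : Set V'))) : Prop :=
  ∀ v : V, φ (Raag.of Γ v) =
    ((liftSubVerts p T v).map (Raag.of (Γ'.induce (T : Set V')))).prod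

/-- The `φ(Γ,T)`-homomorphic word of a word `w`: each letter `x^{e}` of `w` is replaced by the
word `(t₁ t₂ ⋯ t_k)^{e}` where `t₁ < t₂ < ⋯ < t_k` are the lifts of `x` lying in `T`. -/
def homWord (p : V' → V) (T : Finset V') (w : List (V × Bool)) :
    List (↥(T : Set V') × Bool) :=
  w.flatMap fun l =>
    if l.2 then (liftSubVerts p T l.1).map (fun t => (t, true))
    else ((liftSubVerts p T l.1).reverse).map (fun t => (t, false))

/-- `φ(Γ,T)` is `F`-surviving: for every reduced word `w` in `G(Γ)` and every `v ∈ F`, the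
`φ(Γ,T)`-homomorphic word of `w` has no cancellation of `v`. -/
def IsSurviving (Γ : SimpleGraph V) (Γ' : SimpleGraph V') (p : V' → V) (T : Finset V')
    (F : Set V') : Prop :=
  ∀ w : List (V × Bool), IsReducedWord Γ w →
    ∀ (v : V') (hv : v ∈ (T : Set V')), v ∈ F →
      ¬ HasCancellationOf (Γ'.induce (T : Set V')) (homWord p T w) ⟨v, hv⟩

end Phi

/-!
Fix a vertex `v` of `X`. Sending `v` to the stable letter `t` and every other vertex to itself
defines a homomorphism from `G(X)` to the HNN extension of `G(X)` in which `t` commutes with the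
subgroup generated by the vertices outside the link of `v`. Cutting a word at its `v`-letters
gives an HNN word, and a word with no cancellation of `v` gives one without pinches, since an
element of that subgroup has support outside the link. By Britton's lemma, all such words for
one element have the same number of `v`-letters; deleting the pair of a cancellation of `v` keeps
the element, as the middle commutes with `v`. So a word without cancellations of `v` has the
fewest `v`-letters among all words for the same element.

For `φ(Γ,T)`, pick in `F` a lift of every vertex of `Γ`. A reduced word `w` has at most as many
letters `x` as its homomorphic word has letters of the lift of `x`, and since that homomorphic
word has no cancellation of the lift, every word for `φ(Γ,T)(w)` has at least as many such
letters again. Summing over the (distinct) lifts gives `‖w‖ ≤ ‖φ(Γ,T)(w)‖`; the upper bound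
holds because each letter is replaced by at most `|V(T)|` letters.
-/

namespace Raag

variable {U : Type*} {X : SimpleGraph U}

def ofLetter (X : SimpleGraph U) (a : U × Bool) : Raag X :=
  if a.2 then Raag.of X a.1 else (Raag.of X a.1)⁻¹

@[simp] lemma wordProd_nil : wordProd X [] = 1 := rfl

@[simp] lemma wordProd_cons (a : U × Bool) (w : List (U × Bool)) :
    wordProd X (a :: w) = ofLetter X a * wordProd X w := rfl

@[simp] lemma wordProd_append (w w' : List (U × Bool)) :
    wordProd X (w ++ w') = wordProd X w * wordProd X w' := by
  simp [wordProd]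

lemma exists_wordProd_eq (g : Raag X) : ∃ w, wordProd X w = g := by
  obtain ⟨z, rfl⟩ := PresentedGroup.mk_surjective _ g
  obtain ⟨L, rfl⟩ := Quot.exists_rep z
  have hmk : PresentedGroup.mk (raagRels X) = FreeGroup.lift (Raag.of X) :=
    FreeGroup.ext_hom _ _ fun _ => rfl
  refine ⟨L, ?_⟩
  rw [hmk, show Quot.mk _ L = FreeGroup.mk L from rfl, FreeGroup.lift_mk]
  simp only [wordProd, Bool.cond_eq_ite]

def lift {H : Type*} [Group H] (f : U → H)
    (hf : ∀ u w, u ≠ w → ¬ X.Adj u w → Commute (f u) (f w)) : Raag X →* H :=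
  PresentedGroup.toGroup (f := f) <| by
    rintro _ ⟨u, w, huw, hadj, rfl⟩
    simp [(hf u w huw hadj).eq]

@[simp] lemma lift_of {H : Type*} [Group H] (f : U → H)
    (hf : ∀ u w, u ≠ w → ¬ X.Adj u w → Commute (f u) (f w)) (u : U) :
    lift f hf (Raag.of X u) = f u :=
  PresentedGroup.toGroup.of _

lemma commute_of_not_adj {u w : U} (h : ¬ X.Adj u w) :
    Commute (Raag.of X u) (Raag.of X w) := by
  by_cases huw : u = w
  · subst huw; exact Commute.refl _
  · have : Raag.of X u * Raag.of X w * (Raag.of X u)⁻¹ * (Raag.of X w)⁻¹ = 1 :=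
      PresentedGroup.one_of_mem ⟨u, w, huw, h, rfl⟩
    rwa [← commutatorElement_def, commutatorElement_eq_one_iff_commute] at this

lemma forall_mem_map_ofLetter (w : List (U × Bool)) :
    ∀ x ∈ w.map (ofLetter X), x ∈ Set.range (Raag.of X) ∨ x⁻¹ ∈ Set.range (Raag.of X) := by
  rintro _ hx
  obtain ⟨⟨u, _ | _⟩, -, rfl⟩ := List.mem_map.mp hx
  · exact Or.inr ⟨u, by simp [ofLetter]⟩
  · exact Or.inl ⟨u, rfl⟩

lemma exists_word_of_generator_list {l : List (Raag X)}
    (hl : ∀ x ∈ l, x ∈ Set.range (Raag.of X) ∨ x⁻¹ ∈ Set.range (Raag.of X)) :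
    ∃ w, wordProd X w = l.prod ∧ w.length = l.length := by
  induction l with
  | nil => exact ⟨[], rfl, rfl⟩
  | cons x l ih =>
    obtain ⟨w, hw, hlen⟩ := ih fun y hy => hl y (List.mem_cons_of_mem _ hy)
    obtain ⟨a, ha⟩ : ∃ a, ofLetter X a = x := by
      rcases hl x List.mem_cons_self with ⟨u, rfl⟩ | ⟨u, hu⟩
      · exact ⟨(u, true), rfl⟩
      · exact ⟨(u, false), by simp [ofLetter, hu]⟩
    exact ⟨a :: w, by simp [ha, hw], by simp [hlen]⟩

lemma raagNorm_le_length {g : Raag X} {w : List (U × Bool)} (h : wordProd X w = g) :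
    raagNorm X g ≤ w.length :=
  Nat.sInf_le ⟨w.map (ofLetter X), forall_mem_map_ofLetter w, h, by simp⟩

lemma exists_isReducedWord (g : Raag X) :
    ∃ w, IsReducedWord X w ∧ wordProd X w = g ∧ w.length = raagNorm X g := by
  obtain ⟨w₀, hw₀⟩ := exists_wordProd_eq g
  obtain ⟨l, hl, hprod, hlen⟩ := Nat.sInf_mem (⟨_, _, forall_mem_map_ofLetter w₀, hw₀, rfl⟩ :
    {n | ∃ l : List (Raag X), (∀ x ∈ l, x ∈ Set.range (Raag.of X) ∨
      x⁻¹ ∈ Set.range (Raag.of X)) ∧ l.prod = g ∧ l.length = n}.Nonempty)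
  obtain ⟨w, hw, hwl⟩ := exists_word_of_generator_list hl
  refine ⟨w, fun w' hw' => ?_, hw.trans hprod, hwl.trans hlen⟩
  rw [hwl, hlen]
  exact raagNorm_le_length (hw'.trans (hw.trans hprod))

lemma eq_one_of_raagNorm_eq_zero {g : Raag X} (h : raagNorm X g = 0) : g = 1 := by
  obtain ⟨w, -, rfl, hw⟩ := exists_isReducedWord g
  rw [List.length_eq_zero_iff.mp (hw.trans h), wordProd_nil]

lemma raagNorm_one : raagNorm X 1 = 0 :=
  Nat.le_zero.mp (raagNorm_le_length (w := []) rfl)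

lemma raagDist_eq (x y : Raag X) : raagDist X x y = raagNorm X (y * x⁻¹) := rfl

noncomputable def retraction (S : Set U) : Raag X →* Raag X :=
  lift (S.mulIndicator (Raag.of X)) fun u w _ huw => by
    by_cases hu : u ∈ S <;> by_cases hw : w ∈ S <;>
      simp [hu, hw, Set.mulIndicator_of_mem, Set.mulIndicator_of_notMem, commute_of_not_adj huw]

lemma exists_sublist_wordProd_eq_retraction (S : Set U) (w : List (U × Bool)) :
    ∃ w' : List (U × Bool), w'.Sublist w ∧ (∀ a ∈ w', a.1 ∈ S) ∧
      wordProd X w' = retraction S (wordProd X w) := by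
  induction w with
  | nil => exact ⟨[], List.Sublist.slnil, by simp, by simp⟩
  | cons a w ih =>
    obtain ⟨w', hsub, hS, hprod⟩ := ih
    by_cases ha : a.1 ∈ S
    · refine ⟨a :: w', hsub.cons_cons a, ?_, ?_⟩
      · simpa [ha] using hS
      · rcases a with ⟨u, _ | _⟩ <;>
          simp_all [ofLetter, retraction, Set.mulIndicator_of_mem]
    · refine ⟨w', hsub.cons a, hS, ?_⟩
      rcases a with ⟨u, _ | _⟩ <;>
        simp_all [ofLetter, retraction, Set.mulIndicator_of_notMem]

lemma raagSupp_subset_of_mem_closure {S : Set U} {g : Raag X}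
    (hg : g ∈ Subgroup.closure (Raag.of X '' S)) : raagSupp X g ⊆ S := by
  rintro v ⟨w, hw, rfl, b, hmem⟩
  have hfix : retraction S (wordProd X w) = wordProd X w :=
    MonoidHom.eqOn_closure (f := retraction S) (g := MonoidHom.id _)
      (by rintro _ ⟨u, hu, rfl⟩; simp [retraction, Set.mulIndicator_of_mem hu]) hg
  obtain ⟨w', hsub, hS, hprod⟩ := exists_sublist_wordProd_eq_retraction S w
  have : w' = w := hsub.eq_of_length_le (hw w' (hprod.trans hfix))
  exact hS (v, b) (this ▸ hmem)

lemma commute_of_forall_mem_raagSupp_not_adj {v : U} {g : Raag X}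
    (hg : ∀ u ∈ raagSupp X g, ¬ X.Adj v u) : Commute (Raag.of X v) g := by
  obtain ⟨w, hw, rfl, -⟩ := exists_isReducedWord g
  refine Commute.list_prod_right _ _ fun x hx => ?_
  obtain ⟨⟨u, b⟩, hmem, rfl⟩ := List.mem_map.mp hx
  have hvu := commute_of_not_adj (hg u ⟨w, hw, rfl, b, hmem⟩)
  cases b
  · exact hvu.inv_right
  · exact hvu

lemma not_hasCancellationOf_tail {v : U} {a : U × Bool} {w : List (U × Bool)}
    (h : ¬ HasCancellationOf X (a :: w) v) : ¬ HasCancellationOf X w v :=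
  fun ⟨w₁, w', w₂, b, hw, hsupp⟩ => h ⟨a :: w₁, w', w₂, b, by simp [hw], hsupp⟩

section StableLetter

open HNNExtension HNNExtension.NormalWord

def offLinkSubgroup (X : SimpleGraph U) (v : U) : Subgroup (Raag X) :=
  Subgroup.closure (Raag.of X '' {u | ¬ X.Adj v u})

abbrev StableLetterExt (X : SimpleGraph U) (v : U) : Type _ :=
  HNNExtension (Raag X) (offLinkSubgroup X v) (offLinkSubgroup X v) (MulEquiv.refl _)

open Classical in
noncomputable def toStableLetterExt (X : SimpleGraph U) (v : U) :
    Raag X →* StableLetterExt X v :=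
  lift (fun u => if u = v then t else HNNExtension.of (Raag.of X u)) fun u w huw hadj => by
    have commute_t {u w : U} (h : ¬ X.Adj u w) :
        Commute (t : StableLetterExt X u) (HNNExtension.of (Raag.of X w)) :=
      t_mul_of (φ := MulEquiv.refl (offLinkSubgroup X u)) ⟨_, Subgroup.subset_closure ⟨w, h, rfl⟩⟩
    by_cases hu : u = v
    · subst hu
      simpa [Ne.symm huw] using commute_t hadj
    · by_cases hw : w = v
      · subst hw
        simpa [hu] using (commute_t fun h => hadj h.symm).symm
      · simpa [hu, hw] using (commute_of_not_adj hadj).map HNNExtension.of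

def letterSign (b : Bool) : ℤˣ := if b then 1 else -1

open Classical in
/-- The decomposition `w = w₀ v^{e₁} w₁ ⋯ v^{e_k} w_k` of a word around its `v`-letters, as the
head `w₀` and the list of syllables `(e_i, w_i)` of an HNN word. -/
noncomputable def syllables (X : SimpleGraph U) (v : U) :
    List (U × Bool) → Raag X × List (ℤˣ × Raag X)
  | [] => (1, [])
  | a :: w =>
    if a.1 = v then (1, (letterSign a.2, (syllables X v w).1) :: (syllables X v w).2)
    else (ofLetter X a * (syllables X v w).1, (syllables X v w).2)

lemma toStableLetterExt_wordProd (v : U) (w : List (U × Bool)) :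
    toStableLetterExt X v (wordProd X w) = HNNExtension.of (syllables X v w).1 *
      ((syllables X v w).2.map fun x => t ^ (x.1 : ℤ) * HNNExtension.of x.2).prod := by
  induction w with
  | nil => simp [syllables]
  | cons a w ih =>
    rw [wordProd_cons, map_mul, ih]
    rcases a with ⟨u, b⟩
    by_cases hu : u = v
    · subst hu
      cases b <;> simp [syllables, ofLetter, toStableLetterExt, letterSign, mul_assoc]
    · cases b <;> simp [syllables, ofLetter, toStableLetterExt, hu, mul_assoc]

lemma length_syllables [BEq U] [LawfulBEq U] (v : U) (w : List (U × Bool)) :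
    (syllables X v w).2.length = (w.map Prod.fst).count v := by
  induction w with
  | nil => rfl
  | cons a w ih => by_cases ha : a.1 = v <;> simp [syllables, ha, ih]

lemma exists_eq_append_of_mem_head?_syllables {v : U} {w : List (U × Bool)}
    {x : ℤˣ × Raag X} (hx : x ∈ (syllables X v w).2.head?) :
    ∃ w₀ b w₁, w = w₀ ++ (v, b) :: w₁ ∧ (syllables X v w).1 = wordProd X w₀ ∧
      x.1 = letterSign b := by
  induction w with
  | nil => simp [syllables] at hx
  | cons a w ih =>
    by_cases ha : a.1 = v
    · simp only [syllables, if_pos ha, List.head?_cons, Option.mem_some_iff] at hx ⊢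
      exact ⟨[], a.2, w, by simp [← ha], rfl, by rw [← hx]⟩
    · simp only [syllables, if_neg ha] at hx ⊢
      obtain ⟨w₀, b, w₁, rfl, hhead, hsign⟩ := ih hx
      exact ⟨a :: w₀, b, w₁, rfl, by simp [hhead], hsign⟩

lemma isChain_syllables {v : U} {w : List (U × Bool)} (hw : ¬ HasCancellationOf X w v) :
    (syllables X v w).2.IsChain fun x y =>
      x.2 ∈ toSubgroup (offLinkSubgroup X v) (offLinkSubgroup X v) x.1 → x.1 = y.1 := by
  induction w with
  | nil => exact List.isChain_nil
  | cons a w ih =>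
    have htail := ih (not_hasCancellationOf_tail hw)
    rcases a with ⟨u, c⟩
    by_cases hu : u = v
    · subst hu
      simp only [syllables, if_pos]
      refine htail.cons fun y hy hmem => ?_
      obtain ⟨w₀, b, w₁, rfl, hhead, hsign⟩ := exists_eq_append_of_mem_head?_syllables hy
      by_contra hne
      have hb : b = !c := by
        cases c <;> cases b <;> simp_all [letterSign]
      refine hw ⟨[], w₀, w₁, c, by simp [hb], fun u hu => ?_⟩
      simp only [toSubgroup, ite_self, hhead] at hmem
      exact raagSupp_subset_of_mem_closure hmem hu
    · simpa only [syllables, if_neg hu] using htail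

noncomputable def toReducedWord {v : U} {w : List (U × Bool)} (hw : ¬ HasCancellationOf X w v) :
    ReducedWord (Raag X) (offLinkSubgroup X v) (offLinkSubgroup X v) :=
  ⟨(syllables X v w).1, (syllables X v w).2, isChain_syllables hw⟩

lemma count_eq_of_not_hasCancellationOf [BEq U] [LawfulBEq U] {v : U} {w u : List (U × Bool)}
    (hw : ¬ HasCancellationOf X w v) (hu : ¬ HasCancellationOf X u v)
    (h : wordProd X w = wordProd X u) :
    (w.map Prod.fst).count v = (u.map Prod.fst).count v := by
  have hprod : (toReducedWord hw).prod (MulEquiv.refl _) = (toReducedWord hu).prod _ := by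
    simp only [ReducedWord.prod, toReducedWord, ← toStableLetterExt_wordProd, h]
  have := congrArg List.length (ReducedWord.map_fst_eq_and_of_prod_eq _ hprod).1
  simpa [toReducedWord, length_syllables] using this

end StableLetter

section Count

variable [BEq U] [LawfulBEq U]

lemma exists_wordProd_eq_count_add_two_of_hasCancellationOf {v : U} {w : List (U × Bool)}
    (h : HasCancellationOf X w v) :
    ∃ w', wordProd X w' = wordProd X w ∧
      (w'.map Prod.fst).count v + 2 = (w.map Prod.fst).count v := by
  obtain ⟨w₁, w', w₂, b, rfl, hsupp⟩ := h
  refine ⟨w₁ ++ w' ++ w₂, ?_, by simp; omega⟩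
  have hcomm : Commute (ofLetter X (v, b)) (wordProd X w') := by
    have := commute_of_forall_mem_raagSupp_not_adj hsupp
    cases b
    · exact this.inv_left
    · exact this
  have hinv : ofLetter X (v, b) * ofLetter X (v, !b) = 1 := by
    cases b <;> simp [ofLetter]
  simp only [wordProd_append, wordProd_cons, ← mul_assoc, hcomm.eq]
  rw [mul_assoc _ (ofLetter X (v, b)), hinv, mul_one]

theorem count_le_of_not_hasCancellationOf {v : U} {w u : List (U × Bool)}
    (hw : ¬ HasCancellationOf X w v) (h : wordProd X w = wordProd X u) :
    (w.map Prod.fst).count v ≤ (u.map Prod.fst).count v := by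
  induction hn : (u.map Prod.fst).count v using Nat.strong_induction_on generalizing u with
  | _ n ih =>
    by_cases hu : HasCancellationOf X u v
    · obtain ⟨u', hu', hcount⟩ := exists_wordProd_eq_count_add_two_of_hasCancellationOf hu
      have := ih _ (by omega) (h.trans hu'.symm) rfl
      omega
    · exact (count_eq_of_not_hasCancellationOf hw hu h).trans_le hn.le

end Count

section Norm

variable {U' : Type*} {Y : SimpleGraph U'}

lemma injective_of_raagNorm_le {f : Raag X →* Raag Y}
    (h : ∀ g, raagNorm X g ≤ raagNorm Y (f g)) : Function.Injective f := by
  refine (injective_iff_map_eq_one f).mpr fun g hg => eq_one_of_raagNorm_eq_zero ?_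
  simpa [hg, raagNorm_one] using h g

lemma isQIEmbedding_of_raagNorm_le {f : Raag X →* Raag Y} {K : ℕ}
    (hlow : ∀ g, raagNorm X g ≤ raagNorm Y (f g)) (hup : ∀ g, raagNorm Y (f g) ≤ K * raagNorm X g) :
    IsQIEmbedding f (raagDist X) (raagDist Y) := by
  refine ⟨injective_of_raagNorm_le hlow, max K 1, le_max_right _ _, fun x y => ?_⟩
  rw [raagDist_eq, raagDist_eq, ← map_inv, ← map_mul]
  have hlow' : (raagNorm X (y * x⁻¹) : ℝ) ≤ raagNorm Y (f (y * x⁻¹)) := by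
    exact_mod_cast hlow _
  have hup' : (raagNorm Y (f (y * x⁻¹)) : ℝ) ≤ K * raagNorm X (y * x⁻¹) := by
    exact_mod_cast hup _
  have hK : (K : ℝ) * raagNorm X (y * x⁻¹) ≤ max (K : ℝ) 1 * raagNorm X (y * x⁻¹) :=
    mul_le_mul_of_nonneg_right (le_max_left _ _) (Nat.cast_nonneg _)
  have hdiv : (raagNorm X (y * x⁻¹) : ℝ) / max (K : ℝ) 1 ≤ raagNorm X (y * x⁻¹) :=
    div_le_self (Nat.cast_nonneg _) (le_max_right _ _)
  constructor <;> linarith [le_max_right (K : ℝ) 1]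

end Norm

end Raag

namespace List

variable {α β : Type*}

theorem sum_count_eq_length [Fintype α] [BEq α] [LawfulBEq α] (l : List α) :
    ∑ a, l.count a = l.length := by
  induction l with
  | nil => simp
  | cons b l ih =>
    simp only [List.count_cons, Finset.sum_add_distrib, ih, Finset.sum_boole, List.length_cons]
    have hb : (Finset.univ.filter fun x => (b == x) = true) = {b} := by
      ext x
      simp only [Finset.mem_filter, Finset.mem_univ, true_and, beq_iff_eq, Finset.mem_singleton]
      exact eq_comm
    rw [hb, Finset.card_singleton, Nat.cast_one]

theorem sum_count_comp_le_length [Fintype α] [Fintype β] [BEq β] [LawfulBEq β] {f : α → β}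
    (hf : Function.Injective f) (l : List β) : ∑ a, l.count (f a) ≤ l.length :=
  calc ∑ a, l.count (f a) = ∑ b ∈ Finset.univ.map ⟨f, hf⟩, l.count b := by simp
    _ ≤ ∑ b, l.count b := Finset.sum_le_sum_of_subset (Finset.subset_univ _)
    _ = l.length := sum_count_eq_length l

end List

section HomWord

variable {V V' : Type*} [LinearOrder V'] [DecidableEq V] {Γ : SimpleGraph V}
  {Γ' : SimpleGraph V'} {p : V' → V} {T : Finset V'} {φ : Raag Γ →* Raag (Γ'.induce (T : Set V'))}

lemma mem_liftSubVerts {t : V'} (ht : t ∈ (T : Set V')) {x : V} (hx : p t = x) :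
    ⟨t, ht⟩ ∈ liftSubVerts p T x :=
  List.mem_pmap.mpr ⟨t, (Finset.mem_sort _).mpr (Finset.mem_filter.mpr ⟨ht, hx⟩), rfl⟩

lemma length_liftSubVerts_le (x : V) : (liftSubVerts p T x).length ≤ T.card := by
  simpa [liftSubVerts, liftVerts] using Finset.card_filter_le T _

lemma homWord_cons (a : V × Bool) (w : List (V × Bool)) :
    homWord p T (a :: w) = homWord p T [a] ++ homWord p T w := by
  simp [homWord]

lemma length_homWord_singleton (a : V × Bool) :
    (homWord p T [a]).length = (liftSubVerts p T a.1).length := by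
  rcases a with ⟨x, _ | _⟩ <;> simp [homWord]

lemma mem_map_fst_homWord_singleton {t : ↥(T : Set V')} {a : V × Bool} :
    t ∈ (homWord p T [a]).map Prod.fst ↔ t ∈ liftSubVerts p T a.1 := by
  rcases a with ⟨x, _ | _⟩ <;> simp [homWord]

lemma wordProd_homWord (hφ : IsPhi Γ Γ' p T φ) (w : List (V × Bool)) :
    wordProd (Γ'.induce (T : Set V')) (homWord p T w) = φ (wordProd Γ w) := by
  induction w with
  | nil => simp [homWord]
  | cons a w ih =>
    rw [homWord_cons, Raag.wordProd_append, ih, Raag.wordProd_cons, map_mul]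
    congr 1
    rcases a with ⟨x, _ | _⟩
    · simp [homWord, wordProd, Raag.ofLetter, hφ x, List.prod_inv_reverse, Function.comp_def]
    · simp [homWord, wordProd, Raag.ofLetter, hφ x, Function.comp_def]

lemma length_homWord_le (w : List (V × Bool)) :
    (homWord p T w).length ≤ T.card * w.length := by
  induction w with
  | nil => simp [homWord]
  | cons a w ih =>
    rw [homWord_cons, List.length_append, length_homWord_singleton, List.length_cons,
      Nat.mul_succ]
    have := length_liftSubVerts_le (p := p) (T := T) a.1
    omega

lemma count_le_count_homWord {x : V} {t : ↥(T : Set V')} (ht : t ∈ liftSubVerts p T x)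
    (w : List (V × Bool)) :
    (w.map Prod.fst).count x ≤ ((homWord p T w).map Prod.fst).count t := by
  induction w with
  | nil => simp [homWord]
  | cons a w ih =>
    rw [homWord_cons, List.map_append, List.count_append, List.map_cons, List.count_cons]
    by_cases ha : a.1 = x
    · subst ha
      have := List.count_pos_iff.mpr (mem_map_fst_homWord_singleton.mpr ht)
      simp only [beq_self_eq_true, if_true]
      omega
    · simp only [beq_iff_eq, ha, if_false]
      omega

lemma raagNorm_map_le_of_isPhi (hφ : IsPhi Γ Γ' p T φ) (g : Raag Γ) :
    raagNorm (Γ'.induce (T : Set V')) (φ g) ≤ T.card * raagNorm Γ g := by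
  obtain ⟨w, -, rfl, hlen⟩ := Raag.exists_isReducedWord g
  rw [← hlen]
  exact (Raag.raagNorm_le_length (wordProd_homWord hφ w)).trans (length_homWord_le w)

lemma raagNorm_le_raagNorm_map_of_isSurviving [Fintype V] {F : Set V'}
    (hFT : F ⊆ (T : Set V')) (hF : p '' F = Set.univ) (hφ : IsPhi Γ Γ' p T φ)
    (hsurv : IsSurviving Γ Γ' p T F) (g : Raag Γ) :
    raagNorm Γ g ≤ raagNorm (Γ'.induce (T : Set V')) (φ g) := by
  obtain ⟨w, hw, rfl, hwlen⟩ := Raag.exists_isReducedWord g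
  obtain ⟨u, -, hu, hulen⟩ := Raag.exists_isReducedWord (φ (wordProd Γ w))
  choose f hfF hfp using fun x => (hF ▸ Set.mem_univ x : x ∈ p '' F)
  let s : V → ↥(T : Set V') := fun x => ⟨f x, hFT (hfF x)⟩
  have hs : Function.Injective s := fun x y hxy => by
    rw [← hfp x, ← hfp y, show f x = f y from congrArg Subtype.val hxy]
  have hcount (x : V) : (w.map Prod.fst).count x ≤ (u.map Prod.fst).count (s x) :=
    (count_le_count_homWord (mem_liftSubVerts _ (hfp x)) w).trans
      (Raag.count_le_of_not_hasCancellationOf (hsurv w hw _ _ (hfF x))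
        ((wordProd_homWord hφ w).trans hu.symm))
  calc raagNorm Γ (wordProd Γ w) = ∑ x, (w.map Prod.fst).count x := by
        rw [List.sum_count_eq_length, List.length_map, hwlen]
    _ ≤ ∑ x, (u.map Prod.fst).count (s x) := Finset.sum_le_sum fun x _ => hcount x
    _ ≤ raagNorm (Γ'.induce (T : Set V')) (φ (wordProd Γ w)) := by
        simpa [hulen] using List.sum_count_comp_le_length hs (u.map Prod.fst)

end HomWord

theorem surviving_implies_qie_general {V V' : Type} [Fintype V] [DecidableEq V] [LinearOrder V']
    (Γ : SimpleGraph V)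
    (Γ' : SimpleGraph V') (p : V' → V)
    (T : Finset V')
    (F : Set V') (hFT : F ⊆ (T : Set V')) (hF : p '' F = Set.univ)
    (φ : Raag Γ →* Raag (Γ'.induce (T : Set V'))) (hφ : IsPhi Γ Γ' p T φ)
    (hsurv : IsSurviving Γ Γ' p T F) :
    (∀ w : Raag Γ,
      raagNorm Γ w ≤ raagNorm (Γ'.induce (T : Set V')) (φ w) ∧
      raagNorm (Γ'.induce (T : Set V')) (φ w) ≤ T.card * raagNorm Γ w) ∧
    Function.Injective φ ∧
    IsQIEmbedding φ (raagDist Γ) (raagDist (Γ'.induce (T : Set V'))) := by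
  have hlow := raagNorm_le_raagNorm_map_of_isSurviving hFT hF hφ hsurv
  have hup := raagNorm_map_le_of_isPhi hφ
  exact ⟨fun g => ⟨hlow g, hup g⟩, Raag.injective_of_raagNorm_le hlow,
    Raag.isQIEmbedding_of_raagNorm_le hlow hup⟩

/-- Let `p : Γ̃ → Γ` be a universal cover of a finite connected graph with
ordered vertex set, `T` a finite subtree of `Γ̃` and `F ⊆ V(T)` with `p(F) = V(Γ)`.  If
`φ(Γ,T)` is `F`-surviving then `‖w‖ ≤ ‖φ(Γ,T)(w)‖ ≤ |V(T)|·‖w‖` for every `w ∈ G(Γ)`;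
in particular `φ(Γ,T)` is injective and a quasi-isometric group embedding. -/
theorem surviving_implies_qie {V V' : Type} [Fintype V] [DecidableEq V] [LinearOrder V']
    (Γ : SimpleGraph V) (hΓ : Γ.Connected)
    (Γ' : SimpleGraph V') (p : V' → V) (hp : IsUniversalCover Γ' Γ p)
    (T : Finset V') (hT : (Γ'.induce (T : Set V')).IsTree)
    (F : Set V') (hFT : F ⊆ (T : Set V')) (hF : p '' F = Set.univ)
    (φ : Raag Γ →* Raag (Γ'.induce (T : Set V'))) (hφ : IsPhi Γ Γ' p T φ)
    (hsurv : IsSurviving Γ Γ' p T F) :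
    (∀ w : Raag Γ,
      raagNorm Γ w ≤ raagNorm (Γ'.induce (T : Set V')) (φ w) ∧
      raagNorm (Γ'.induce (T : Set V')) (φ w) ≤ T.card * raagNorm Γ w) ∧
    Function.Injective φ ∧
    IsQIEmbedding φ (raagDist Γ) (raagDist (Γ'.induce (T : Set V'))) :=
  surviving_implies_qie_general Γ Γ' p T F hFT hF φ hφ hsurv
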